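/- For every real α > 0 and every real x > 0, ∑_{m=0}^∞ 1/(m!·Γ(m+α+1))·(x/2)^{2m+α} = (1/Γ(α))·(x/2)^α · ∫_0^1 I_0(x·√(1−t))·t^{α−1} dt, where I_0(y) = ∑_{m=0}^∞ 1/(m!·Γ(m+1))·(y/2)^{2m}. -/
import Mathlib
open Real MeasureTheory

lemma beta_aux (α : ℝ) (hα : 0 < α) (m : ℕ) :
    ∫ t in (0:ℝ)..1, (1 - t) ^ m * t ^ (α - 1) =
      m.factorial * Real.Gamma α / Real.Gamma (m + α + 1) := by
  have h1 : Complex.betaIntegral α (m + 1) =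
      ((∫ t in (0:ℝ)..1, (1 - t) ^ m * t ^ (α - 1) : ℝ) : ℂ) := by
    rw [← intervalIntegral.integral_ofReal, Complex.betaIntegral]
    refine intervalIntegral.integral_congr fun t ht => ?_
    rw [Set.uIcc_of_le zero_le_one] at ht
    rw [add_sub_cancel_right, Complex.cpow_natCast]
    have e0 : ((α:ℂ) - 1) = ((α - 1 : ℝ) : ℂ) := by push_cast; ring
    rw [e0, ← Complex.ofReal_cpow ht.1]
    push_cast
    ring
  have hs : (0:ℝ) < (α : ℂ).re := by simpa using hα
  have ht : (0:ℝ) < ((m : ℂ) + 1).re := by simp; positivity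
  have h2 := Complex.Gamma_mul_Gamma_eq_betaIntegral hs ht
  rw [h1] at h2
  have e2 : ((m : ℂ) + 1) = (((m : ℝ) + 1 : ℝ) : ℂ) := by push_cast; ring
  have e3 : ((α : ℂ) + ((m : ℂ) + 1)) = (((m + α + 1 : ℝ)) : ℂ) := by push_cast; ring
  rw [e3, e2, Complex.Gamma_ofReal, Complex.Gamma_ofReal, Complex.Gamma_ofReal] at h2
  have h3 : Real.Gamma α * Real.Gamma ((m : ℝ) + 1) =
      Real.Gamma (m + α + 1) * ∫ t in (0:ℝ)..1, (1 - t) ^ m * t ^ (α - 1) := by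
    exact_mod_cast h2
  rw [Real.Gamma_nat_eq_factorial] at h3
  have hne : Real.Gamma (m + α + 1) ≠ 0 :=
    (Real.Gamma_pos_of_pos (by positivity)).ne'
  field_simp at h3 ⊢
  linarith [h3]

/-- The modified Bessel function of the first kind of order 0, defined by its series. -/
noncomputable def besselI0 (y : ℝ) : ℝ :=
  ∑' m : ℕ, 1 / (m.factorial * Real.Gamma (m + 1)) * (y / 2) ^ (2 * m)

theorem bessel_I_integral_representation (α x : ℝ) (hα : 0 < α) (hx : 0 < x) :
    ∑' m : ℕ, 1 / (m.factorial * Real.Gamma (m + α + 1)) *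
        (x / 2) ^ (2 * (m : ℝ) + α)
      = (1 / Real.Gamma α) * (x / 2) ^ α *
        ∫ t in (0:ℝ)..1, besselI0 (x * Real.sqrt (1 - t)) * t ^ (α - 1) := by
  have hx2 : (0:ℝ) < x / 2 := by positivity
  set F : ℕ → ℝ → ℝ := fun m t =>
    1 / ((m.factorial : ℝ) * m.factorial) * (x / 2) ^ (2 * m) * ((1 - t) ^ m * t ^ (α - 1))
    with hF
  -- pointwise expansion of the integrand on Ioc 0 1
  have hb : ∀ t ∈ Set.Ioc (0:ℝ) 1,
      besselI0 (x * Real.sqrt (1 - t)) * t ^ (α - 1) = ∑' m : ℕ, F m t := by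
    intro t ht
    rw [besselI0, ← tsum_mul_right]
    refine tsum_congr fun m => ?_
    have h1t : (0:ℝ) ≤ 1 - t := by linarith [ht.2]
    have hsq : (x * Real.sqrt (1 - t) / 2) ^ (2 * m)
        = (x / 2) ^ (2 * m) * (1 - t) ^ m := by
      have e : x * Real.sqrt (1 - t) / 2 = (x / 2) * Real.sqrt (1 - t) := by ring
      rw [e, mul_pow]
      congr 1
      rw [pow_mul, Real.sq_sqrt h1t]
    rw [hsq, Real.Gamma_nat_eq_factorial]
    ring
  -- integrability of each term
  have hg_int : ∀ m : ℕ, IntegrableOn (fun t => (1 - t) ^ m * t ^ (α - 1))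
      (Set.Ioc (0:ℝ) 1) volume := by
    intro m
    have : IntervalIntegrable (fun t : ℝ => (1 - t) ^ m * t ^ (α - 1)) volume 0 1 :=
      (intervalIntegral.intervalIntegrable_rpow' (by linarith)).continuousOn_mul
        (by fun_prop)
    rw [intervalIntegrable_iff_integrableOn_Ioc_of_le zero_le_one] at this
    exact this
  have hF_int : ∀ m : ℕ, Integrable (F m) (volume.restrict (Set.Ioc (0:ℝ) 1)) := by
    intro m
    exact ((hg_int m).const_mul _)
  -- value of integrals
  have hg_val : ∀ m : ℕ, ∫ t in Set.Ioc (0:ℝ) 1, (1 - t) ^ m * t ^ (α - 1)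
      = m.factorial * Real.Gamma α / Real.Gamma (m + α + 1) := by
    intro m
    rw [← beta_aux α hα m, intervalIntegral.integral_of_le zero_le_one]
  have hFnonneg : ∀ m : ℕ, ∀ t ∈ Set.Ioc (0:ℝ) 1, 0 ≤ F m t := by
    intro m t ht
    have h1t : (0:ℝ) ≤ 1 - t := by linarith [ht.2]
    have := Real.rpow_nonneg ht.1.le (α - 1)
    positivity
  have hF_val : ∀ m : ℕ, ∫ t in Set.Ioc (0:ℝ) 1, F m t
      = 1 / ((m.factorial : ℝ) * m.factorial) * (x / 2) ^ (2 * m) *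
        (m.factorial * Real.Gamma α / Real.Gamma (m + α + 1)) := by
    intro m
    rw [hF]
    simp only [mul_assoc]
    rw [MeasureTheory.integral_const_mul, MeasureTheory.integral_const_mul, hg_val m]
  -- summability of integrals of norms
  have hg_le : ∀ m : ℕ, ∫ t in Set.Ioc (0:ℝ) 1, (1 - t) ^ m * t ^ (α - 1) ≤ 1 / α := by
    intro m
    have h1 : ∫ t in Set.Ioc (0:ℝ) 1, t ^ (α - 1) = 1 / α := by
      rw [← intervalIntegral.integral_of_le zero_le_one,
        integral_rpow (Or.inl (by linarith))]
      rw [Real.one_rpow, Real.zero_rpow (by linarith), sub_add_cancel]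
      simp
    rw [← h1]
    refine setIntegral_mono_on (hg_int m) ?_ measurableSet_Ioc ?_
    · have : IntervalIntegrable (fun t : ℝ => t ^ (α - 1)) volume 0 1 :=
        intervalIntegral.intervalIntegrable_rpow' (by linarith)
      rw [intervalIntegrable_iff_integrableOn_Ioc_of_le zero_le_one] at this
      exact this
    · intro t ht
      have h1t : (0:ℝ) ≤ 1 - t := by linarith [ht.2]
      have h2t : (1 - t) ^ m ≤ 1 := pow_le_one₀ h1t (by linarith [ht.1])
      have h3t : (0:ℝ) ≤ t ^ (α - 1) := Real.rpow_nonneg ht.1.le _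
      nlinarith
  have hsum : Summable fun m : ℕ => ∫ t in Set.Ioc (0:ℝ) 1, ‖F m t‖ := by
    have key : ∀ m : ℕ, ∫ t in Set.Ioc (0:ℝ) 1, ‖F m t‖
        = ∫ t in Set.Ioc (0:ℝ) 1, F m t := by
      intro m
      refine setIntegral_congr_fun measurableSet_Ioc fun t ht => ?_
      exact Real.norm_of_nonneg (hFnonneg m t ht)
    refine Summable.of_nonneg_of_le
      (fun m => by rw [key m]; exact setIntegral_nonneg measurableSet_Ioc (hFnonneg m))
      (fun m => ?_)
      (((Real.summable_pow_div_factorial ((x/2)^2)).mul_right (1/α)))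
    rw [key m]
    have hfac1 : (1:ℝ) ≤ (m.factorial : ℝ) := by exact_mod_cast Nat.factorial_pos m
    have hfacpos : (0:ℝ) < (m.factorial : ℝ) := by positivity
    calc ∫ t in Set.Ioc (0:ℝ) 1, F m t
        = 1 / ((m.factorial : ℝ) * m.factorial) * (x / 2) ^ (2 * m) *
          ∫ t in Set.Ioc (0:ℝ) 1, (1 - t) ^ m * t ^ (α - 1) := by
          rw [hF]; simp only [mul_assoc]
          rw [MeasureTheory.integral_const_mul, MeasureTheory.integral_const_mul]
      _ ≤ 1 / ((m.factorial : ℝ) * m.factorial) * (x / 2) ^ (2 * m) * (1 / α) := by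
          refine mul_le_mul_of_nonneg_left (hg_le m) (by positivity)
      _ ≤ ((x/2)^2) ^ m / (m.factorial : ℝ) * (1 / α) := by
          rw [← pow_mul]
          refine mul_le_mul_of_nonneg_right ?_ (by positivity)
          have h5 : (1:ℝ)/((m.factorial:ℝ)*m.factorial) ≤ 1/(m.factorial:ℝ) := by
            apply one_div_le_one_div_of_le hfacpos
            nlinarith
          calc 1/((m.factorial:ℝ)*m.factorial) * (x/2)^(2*m)
              ≤ 1/(m.factorial:ℝ) * (x/2)^(2*m) :=
                mul_le_mul_of_nonneg_right h5 (by positivity)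
            _ = (x/2)^(2*m)/m.factorial := by ring
  -- interchange sum and integral
  have hswap : ∫ t in (0:ℝ)..1, besselI0 (x * Real.sqrt (1 - t)) * t ^ (α - 1)
      = ∑' m : ℕ, ∫ t in Set.Ioc (0:ℝ) 1, F m t := by
    rw [intervalIntegral.integral_of_le zero_le_one,
      setIntegral_congr_fun measurableSet_Ioc hb]
    exact (MeasureTheory.integral_tsum_of_summable_integral_norm hF_int hsum).symm
  rw [hswap]
  -- final computation
  rw [← tsum_mul_left]
  refine tsum_congr fun m => ?_
  rw [hF_val m]
  have hΓα : Real.Gamma α ≠ 0 := (Real.Gamma_pos_of_pos hα).ne'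
  have hΓm : Real.Gamma (m + α + 1) ≠ 0 := (Real.Gamma_pos_of_pos (by positivity)).ne'
  have hfac : (m.factorial : ℝ) ≠ 0 := by positivity
  have hrpow : (x / 2) ^ (2 * (m : ℝ) + α) = (x / 2) ^ (2 * m) * (x / 2) ^ α := by
    rw [Real.rpow_add hx2]
    congr 1
    rw [show (2 * (m:ℝ)) = ((2 * m : ℕ) : ℝ) by push_cast; ring, Real.rpow_natCast]
  rw [hrpow]
  field_simp
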